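/- arXiv:2504.14410 — 6 statements merged into one kernel-verified Lean document; each statement's English description precedes it below -/
import Mathlib

section
/- Let k ≥ 1 and t ≥ 1 be integers and let f : 𝔽₂^k → S be a function (into any type S) that is not constant, i.e., there exist messages with distinct f-values. Then for every natural number r and every parity map p : 𝔽₂^k → 𝔽₂^r such that for all messages u, v with f(u) ≠ f(v) the Hamming distance between the concatenated codewords (u, p(u)) and (v, p(v)) is at least 2t+1, one has r ≥ 2t. -/
open Finset

private lemma hammingDist_append {k r : ℕ} {α : Type*} [DecidableEq α]
    (u v : Fin k → α) (a b : Fin r → α) :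
    hammingDist (Fin.append u a) (Fin.append v b) = hammingDist u v + hammingDist a b := by
  simp only [hammingDist, Finset.card_filter]
  rw [Fin.sum_univ_add]
  simp [Fin.append_left, Fin.append_right]

private lemma exists_adjacent {S : Type*} {k : ℕ} (f : (Fin k → ZMod 2) → S)
    (u v : Fin k → ZMod 2) (hfv : f u ≠ f v) :
    ∃ a b : Fin k → ZMod 2, hammingDist a b ≤ 1 ∧ f a ≠ f b := by
  suffices h : ∀ n (u v : Fin k → ZMod 2), hammingDist u v = n → f u ≠ f v →
      ∃ a b : Fin k → ZMod 2, hammingDist a b ≤ 1 ∧ f a ≠ f b from h _ u v rfl hfv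
  clear hfv u v
  intro n
  induction n using Nat.strong_induction_on with
  | _ n ih =>
    intro u v hn hfv
    rcases le_or_gt (hammingDist u v) 1 with h | h
    · exact ⟨u, v, h, hfv⟩
    · have huv : u ≠ v := by
        intro e; exact hfv (by rw [e])
      obtain ⟨i, hi⟩ : ∃ i, u i ≠ v i := Function.ne_iff.mp huv
      set w := Function.update u i (v i) with hw
      have hlt : hammingDist w v < hammingDist u v := by
        apply Finset.card_lt_card
        constructor
        · intro j hj
          simp only [Finset.mem_filter, Finset.mem_univ, true_and] at hj ⊢
          rcases eq_or_ne j i with rfl | hji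
          · simp [hw] at hj
          · simpa [hw, Function.update_of_ne hji] using hj
        · intro hsub
          have := hsub (Finset.mem_filter.mpr ⟨Finset.mem_univ i, hi⟩)
          simp [hw] at this
      rcases eq_or_ne (f u) (f w) with he | hne
      · exact ih _ (hn ▸ hlt) w v rfl (he ▸ hfv)
      · refine ⟨u, w, ?_, hne⟩
        have : Finset.univ.filter (fun j => u j ≠ w j) ⊆ {i} := by
          intro j hj
          simp only [Finset.mem_filter, Finset.mem_univ, true_and] at hj
          by_contra hji
          simp only [Finset.mem_singleton] at hji
          exact hj (by simp [hw, Function.update_of_ne hji])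
        calc hammingDist u w ≤ ({i} : Finset (Fin k)).card := Finset.card_le_card this
          _ = 1 := Finset.card_singleton i

/-- Lower bound `r ≥ 2t` on the redundancy of any `(f,t)`-FCC over `𝔽₂`
for a non-constant function `f`. -/
theorem fcc_redundancy_lower_bound_binary {S : Type*} (k t : ℕ) (hk : 1 ≤ k) (ht : 1 ≤ t)
    (f : (Fin k → ZMod 2) → S) (hf : ∃ u v : Fin k → ZMod 2, f u ≠ f v)
    (r : ℕ) (p : (Fin k → ZMod 2) → Fin r → ZMod 2)
    (hp : ∀ u v : Fin k → ZMod 2, f u ≠ f v →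
      2 * t + 1 ≤ hammingDist (Fin.append u (p u)) (Fin.append v (p v))) :
    2 * t ≤ r := by
  obtain ⟨u, v, huv⟩ := hf
  obtain ⟨a, b, hab1, habf⟩ := exists_adjacent f u v huv
  have h1 := hp a b habf
  rw [hammingDist_append] at h1
  have h2 : hammingDist (p a) (p b) ≤ r := by
    simpa using hammingDist_le_card_fintype (x := p a) (y := p b)
  omega
end

section
/- Let k ≥ 2 and t ≥ 1 be integers with (t/k)·log₂(e) < 1, and let f : 𝔽₂^k → S be any function. Then there exists a natural number r with r < t·log₂(2k) / (1 − (t/k)·log₂(e)) and a parity map p : 𝔽₂^k → 𝔽₂^r such that for all messages u, v with f(u) ≠ f(v), the Hamming distance between the concatenated codewords (u, p(u)) and (v, p(v)) is at least 2t+1. In particular, the optimal redundancy satisfies r_f(k,t) < t·log₂(2k) / (1 − (t/k)·log₂(e)). -/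
open Real

/-- A parity map `p` yields an `(f,t)`-FCC over `𝔽₂`: messages with distinct `f`-values
have concatenated codewords at Hamming distance at least `2t+1`. -/
def IsFCCBin {S : Type*} {k r : ℕ} (t : ℕ) (f : (Fin k → ZMod 2) → S)
    (p : (Fin k → ZMod 2) → Fin r → ZMod 2) : Prop :=
  ∀ u v : Fin k → ZMod 2, f u ≠ f v →
    2 * t + 1 ≤ hammingDist (Fin.append u (p u)) (Fin.append v (p v))

/-- The optimal redundancy `r_f(k,t)`: the least `r` for which an `(f,t)`-FCC exists. -/
noncomputable def optRedundancyBin {S : Type*} (k t : ℕ) (f : (Fin k → ZMod 2) → S) : ℕ :=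
  sInf {r : ℕ | ∃ p : (Fin k → ZMod 2) → Fin r → ZMod 2, IsFCCBin t f p}

/-! The parity map is the systematic encoder of a binary BCH code of length `2 ^ m - 1` and
designed distance `2t + 1`, where `m` is least with `k + t m < 2 ^ m`; its generator has degree
at most `t m`. By the BCH bound (a Vandermonde determinant) any two codewords differ in at least
`2t + 1` places, whatever `f` is. Minimality of `m` gives `2 ^ (m - 1) < k + t m`, hence
`m - 1 < log₂ k + (t m / k) log₂ e`, i.e. `m (1 - (t / k) log₂ e) < log₂ (2k)`. -/

open Polynomial

theorem hammingDist_append_s1 {β : Type*} [DecidableEq β] {m n : ℕ} (a a' : Fin m → β)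
    (b b' : Fin n → β) :
    hammingDist (Fin.append a b) (Fin.append a' b') = hammingDist a a' + hammingDist b b' := by
  simp only [hammingDist, Finset.card_filter, Fin.sum_univ_add, Fin.append_left, Fin.append_right]

theorem eq_zero_of_forall_sum_mul_pow_succ_eq_zero {ι R : Type*} [Fintype ι] [CommRing R]
    [IsDomain R] {c y : ι → R} (hy : Function.Injective y) (hy0 : ∀ i, y i ≠ 0)
    (h : ∀ j < Fintype.card ι, ∑ i, c i * y i ^ (j + 1) = 0) : c = 0 := by
  let e := Fintype.equivFin ι
  have hcy : (fun b => c (e.symm b) * y (e.symm b)) = 0 := by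
    refine Matrix.eq_zero_of_forall_pow_sum_mul_pow_eq_zero (hy.comp e.symm.injective) fun j => ?_
    rw [← h j j.2, ← e.symm.sum_comp]
    simp only [Function.comp_apply, pow_succ, mul_assoc, mul_comm (y _)]
  funext i
  simpa [hy0] using congrFun hcy (e i)

namespace Polynomial

theorem aeval_pow_char_eq_pow {p : ℕ} [Fact p.Prime] {A : Type*} [CommSemiring A]
    [Algebra (ZMod p) A] (w : (ZMod p)[X]) (β : A) :
    aeval (β ^ p) w = aeval β w ^ p := by
  rw [← expand_aeval, ZMod.expand_card, map_pow]

theorem lt_card_support_of_aeval_pow_eq_zero {K F : Type*} [Field K] [Field F] [Algebra K F]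
    {α : F} {w : K[X]} {d : ℕ} (hw : w ≠ 0) (hdeg : w.natDegree < orderOf α)
    (h : ∀ j ∈ Finset.Icc 1 d, aeval (α ^ j) w = 0) : d < w.support.card := by
  by_contra! hcard
  have hα : α ≠ 0 := by
    rintro rfl
    have h01 := pow_orderOf_eq_one (0 : F)
    rw [zero_pow (by omega)] at h01
    exact zero_ne_one h01
  have hinj : Function.Injective fun n : w.support => α ^ (n : ℕ) := fun a b hab =>
    Subtype.ext <| pow_injOn_Iio_orderOf
      ((le_natDegree_of_mem_supp _ a.2).trans_lt hdeg)
      ((le_natDegree_of_mem_supp _ b.2).trans_lt hdeg) hab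
  have hcoeff := eq_zero_of_forall_sum_mul_pow_succ_eq_zero
    (c := fun n : w.support => algebraMap K F (w.coeff n)) hinj (fun _ => pow_ne_zero _ hα)
    fun j hj => by
      rw [← h (j + 1) (Finset.mem_Icc.mpr ⟨by omega, by rw [Fintype.card_coe] at hj; omega⟩),
        aeval_def, eval₂_eq_sum, sum_def]
      simp only [← pow_mul, mul_comm]
      exact Finset.sum_coe_sort w.support fun n => α ^ (n * (j + 1)) * algebraMap K F (w.coeff n)
  obtain ⟨n, hn⟩ := support_nonempty.mpr hw
  simpa [mem_support_iff.mp hn] using congrFun hcoeff ⟨n, hn⟩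

section Systematic

variable {R : Type*} [Ring R] [DecidableEq R]

theorem card_support_ofFn {n : ℕ} (v : Fin n → R) :
    (ofFn n v).support.card = hammingNorm v := by
  have hsupp : (ofFn n v).support = ({i | v i ≠ 0} : Finset (Fin n)).map Fin.valEmbedding := by
    ext i
    simp only [mem_support_iff, Finset.mem_map, Finset.mem_filter, Finset.mem_univ, true_and,
      Fin.valEmbedding_apply]
    by_cases hi : i < n
    · rw [ofFn_coeff_eq_val_of_lt _ hi]
      exact ⟨fun h => ⟨⟨i, hi⟩, h, rfl⟩, by rintro ⟨j, hj, rfl⟩; exact hj⟩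
    · rw [ofFn_coeff_eq_zero_of_ge _ (not_lt.mp hi)]
      exact ⟨fun h => (h rfl).elim, fun ⟨j, _, hj⟩ => absurd (hj ▸ j.2) hi⟩
  rw [hsupp, Finset.card_map]
  rfl

theorem ofFn_append {m n : ℕ} (a : Fin m → R) (b : Fin n → R) :
    ofFn (m + n) (Fin.append a b) = ofFn m a + X ^ m * ofFn n b := by
  ext i
  rw [coeff_add, coeff_X_pow_mul']
  rcases lt_or_ge i m with h | h
  · simp [h, show i < m + n by omega, Fin.append, Fin.addCases, not_le.mpr h]
  · rcases lt_or_ge i (m + n) with h' | h'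
    · simp [h, h', show i - m < n by omega, Fin.append, Fin.addCases, not_lt.mpr h]
    · simp [h, h', show n ≤ i - m by omega]

theorem ofFn_toFn_of_degree_lt {n : ℕ} {p : R[X]} (hp : p.degree < n) :
    ofFn n (toFn n p) = p := by
  ext i
  by_cases hi : i < n
  · simp [hi, toFn]
  · rw [ofFn_coeff_eq_zero_of_ge _ (not_lt.mp hi),
      coeff_eq_zero_of_degree_lt (hp.trans_le (by exact_mod_cast not_lt.mp hi))]

/-- Systematic encoding for the cyclic code generated by `g`: the message fills the top `k`
coefficients of the codeword polynomial. -/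
noncomputable def systematicParity (g : R[X]) (r : ℕ) {k : ℕ} (u : Fin k → R) : Fin r → R :=
  -toFn r ((ofFn k u * X ^ r) %ₘ g)

theorem ofFn_append_systematicParity [Nontrivial R] {g : R[X]} {r k : ℕ} (hg : g.Monic)
    (hr : g.natDegree ≤ r) (u : Fin k → R) :
    ofFn (r + k) (Fin.append (systematicParity g r u) u) = g * ((ofFn k u * X ^ r) /ₘ g) := by
  have hrem : ((ofFn k u * X ^ r) %ₘ g).degree < r :=
    (degree_modByMonic_lt _ hg).trans_le (degree_le_natDegree.trans (by exact_mod_cast hr))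
  rw [ofFn_append, systematicParity, map_neg, ofFn_toFn_of_degree_lt hrem, X_pow_mul,
    neg_add_eq_sub, sub_eq_iff_eq_add']
  exact (modByMonic_add_div _ g).symm

theorem lt_hammingDist_append_systematicParity [Nontrivial R] {g : R[X]} {r k d : ℕ}
    (hg : g.Monic) (hr : g.natDegree ≤ r)
    (hd : ∀ w : R[X], w ≠ 0 → w.natDegree < r + k → g ∣ w → d < w.support.card)
    {u v : Fin k → R} (huv : u ≠ v) :
    d < hammingDist (Fin.append u (systematicParity g r u))
      (Fin.append v (systematicParity g r v)) := by
  set cu := Fin.append (systematicParity g r u) u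
  set cv := Fin.append (systematicParity g r v) v
  have hne : cu ≠ cv := by
    obtain ⟨i, hi⟩ := Function.ne_iff.mp huv
    exact fun h => hi (by simpa [cu, cv] using congrFun h (Fin.natAdd r i))
  have hw : ofFn (r + k) (cv - cu) ≠ 0 :=
    (injective_ofFn _).ne (sub_ne_zero.mpr hne.symm) |>.trans_eq (map_zero _)
  rw [hammingDist_append_s1, add_comm, ← hammingDist_append_s1, hammingDist_eq_hammingNorm,
    neg_add_eq_sub, ← card_support_ofFn]
  refine hd _ hw ((natDegree_lt_iff_degree_lt hw).mpr (ofFn_degree_lt _)) ?_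
  rw [map_sub, ofFn_append_systematicParity hg hr, ofFn_append_systematicParity hg hr]
  exact dvd_sub (dvd_mul_right _ _) (dvd_mul_right _ _)

end Systematic

end Polynomial

section BCH

variable {F : Type*} [Field F] [Algebra (ZMod 2) F]

/-- The generator polynomial of the narrow-sense binary BCH code of designed distance `2t + 1`.
Odd exponents suffice: over `𝔽₂`, `w(β) = 0` implies `w(β²) = w(β)² = 0`. -/
noncomputable def bchGenerator (α : F) (t : ℕ) : (ZMod 2)[X] :=
  ∏ j ∈ Finset.range t, minpoly (ZMod 2) (α ^ (2 * j + 1))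

theorem bchGenerator_monic [Finite F] (α : F) (t : ℕ) : (bchGenerator α t).Monic :=
  monic_prod_of_monic _ _ fun _ _ => minpoly.monic (.of_finite _ _)

theorem natDegree_bchGenerator_le [Finite F] (α : F) (t : ℕ) :
    (bchGenerator α t).natDegree ≤ t * Module.finrank (ZMod 2) F := by
  rw [bchGenerator, natDegree_prod _ _ fun _ _ => (minpoly.monic (.of_finite _ _)).ne_zero]
  simpa using Finset.sum_le_sum fun j (_ : j ∈ Finset.range t) =>
    minpoly.natDegree_le (A := ZMod 2) (α ^ (2 * j + 1))

theorem aeval_pow_eq_zero_of_bchGenerator_dvd {α : F} {t : ℕ} {w : (ZMod 2)[X]}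
    (h : bchGenerator α t ∣ w) : ∀ j ∈ Finset.Icc 1 (2 * t), aeval (α ^ j) w = 0 := by
  obtain ⟨q, rfl⟩ := h
  intro j hj
  induction j using Nat.strong_induction_on with
  | _ j ih =>
    rw [Finset.mem_Icc] at hj
    rcases Nat.even_or_odd' j with ⟨i, rfl | rfl⟩
    · rw [mul_comm, pow_mul, aeval_pow_char_eq_pow,
        ih i (by omega) (Finset.mem_Icc.mpr ⟨by omega, by omega⟩), zero_pow two_ne_zero]
    · rw [map_mul, bchGenerator, map_prod,
        Finset.prod_eq_zero (Finset.mem_range.mpr (by omega)) (minpoly.aeval _ _), zero_mul]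

theorem two_mul_lt_card_support_of_bchGenerator_dvd {α : F} {t : ℕ} {w : (ZMod 2)[X]}
    (hw : w ≠ 0) (hdeg : w.natDegree < orderOf α) (h : bchGenerator α t ∣ w) :
    2 * t < w.support.card :=
  lt_card_support_of_aeval_pow_eq_zero hw hdeg (aeval_pow_eq_zero_of_bchGenerator_dvd h)

end BCH

theorem exists_parity_map_lt_hammingDist {k t m : ℕ} (hm : m ≠ 0) (hkm : k + t * m < 2 ^ m) :
    ∃ p : (Fin k → ZMod 2) → Fin (t * m) → ZMod 2,
      ∀ u v, u ≠ v → 2 * t < hammingDist (Fin.append u (p u)) (Fin.append v (p v)) := by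
  obtain ⟨ζ, hζ⟩ := IsCyclic.exists_generator (α := (GaloisField 2 m)ˣ)
  have hζ_order : orderOf (ζ : GaloisField 2 m) = 2 ^ m - 1 := by
    rw [orderOf_units, orderOf_eq_card_of_forall_mem_zpowers hζ, Nat.card_units,
      GaloisField.card 2 m hm]
  have hdeg := natDegree_bchGenerator_le (ζ : GaloisField 2 m) t
  rw [GaloisField.finrank 2 hm] at hdeg
  exact ⟨systematicParity (bchGenerator (ζ : GaloisField 2 m) t) (t * m), fun u v huv =>
    lt_hammingDist_append_systematicParity (bchGenerator_monic _ t) hdeg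
      (fun w hw hwdeg hdvd => two_mul_lt_card_support_of_bchGenerator_dvd hw (by omega) hdvd)
      huv⟩

theorem exists_add_mul_lt_two_pow (a b : ℕ) : ∃ m, a + b * m < 2 ^ m := by
  set n := a + b + 1
  refine ⟨4 * n, ?_⟩
  have hb : b * (4 * n) ≤ n * (4 * n) := Nat.mul_le_mul_right _ (by omega)
  have hn : n + n * (4 * n) < (n + 1) ^ 4 := by ring_nf; nlinarith [Nat.zero_le n]
  calc a + b * (4 * n) < (n + 1) ^ 4 := by omega
    _ ≤ (2 ^ n) ^ 4 := Nat.pow_le_pow_left Nat.lt_two_pow_self 4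
    _ = 2 ^ (4 * n) := by rw [← pow_mul, mul_comm]

theorem exists_two_pow_pred_lt_add_mul {a b : ℕ} (ha : 0 < a) (hb : 0 < b) :
    ∃ m, 0 < m ∧ a + b * m < 2 ^ m ∧ 2 ^ (m - 1) < a + b * m := by
  have hex := exists_add_mul_lt_two_pow a b
  have hpos : 0 < Nat.find hex := (Nat.find_pos hex).mpr (by simpa [Nat.pos_iff_ne_zero] using ha)
  refine ⟨Nat.find hex, hpos, Nat.find_spec hex, ?_⟩
  have hmin := Nat.find_min hex (Nat.sub_lt hpos one_pos)
  have hstep : b * (Nat.find hex - 1) < b * Nat.find hex :=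
    Nat.mul_lt_mul_of_pos_left (by omega) hb
  omega

theorem Real.logb_one_add_le {b x : ℝ} (hb : 1 < b) (hx : -1 < x) :
    logb b (1 + x) ≤ x * logb b (exp 1) :=
  calc logb b (1 + x) ≤ logb b (exp x) :=
        logb_le_logb_of_le hb (by linarith) (by linarith [add_one_le_exp x])
    _ = x * logb b (exp 1) := by simp only [logb, log_exp]; ring

theorem mul_lt_div_of_two_pow_pred_lt {k t m : ℕ} (hk : 0 < k) (ht : 0 < t) (hm : 0 < m)
    (hreg : (t : ℝ) / k * logb 2 (exp 1) < 1) (h : 2 ^ (m - 1) < k + t * m) :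
    ((t * m : ℕ) : ℝ) < t * logb 2 (2 * k) / (1 - (t : ℝ) / k * logb 2 (exp 1)) := by
  set L := logb 2 (exp 1)
  have hk' : (0 : ℝ) < k := by exact_mod_cast hk
  have hlog : (m : ℝ) - 1 < logb 2 (k + t * m) := by
    rw [lt_logb_iff_rpow_lt one_lt_two (by positivity), ← Nat.cast_pred hm, rpow_natCast]
    exact_mod_cast h
  have hsplit : logb 2 (k + t * m) ≤ logb 2 k + t * m / k * L := by
    rw [show (k : ℝ) + t * m = k * (1 + t * m / k) by field_simp,
      logb_mul hk'.ne' (by positivity)]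
    have : (0 : ℝ) ≤ t * m / k := by positivity
    linarith [logb_one_add_le one_lt_two (show -1 < (t : ℝ) * m / k by linarith)]
  have hkey : (m : ℝ) * (1 - t / k * L) < logb 2 (2 * k) := by
    rw [logb_mul two_ne_zero hk'.ne', logb_self_eq_one one_lt_two]
    have : (t : ℝ) * m / k * L = m * (t / k * L) := by ring
    linarith
  rw [lt_div_iff₀ (by linarith), Nat.cast_mul, mul_assoc]
  exact mul_lt_mul_of_pos_left hkey (by exact_mod_cast ht)

/-- For `k ≥ 2`, `t ≥ 1` with `(t/k)·log₂ e < 1`, there is an `(f,t)`-FCC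
over `𝔽₂` with redundancy `r < t·log₂(2k) / (1 − (t/k)·log₂ e)`; in particular the
optimal redundancy is below this bound. -/
theorem fcc_redundancy_upper_bound_binary {S : Type*} (k t : ℕ) (hk : 2 ≤ k) (ht : 1 ≤ t)
    (hreg : (t : ℝ) / k * Real.logb 2 (Real.exp 1) < 1)
    (f : (Fin k → ZMod 2) → S) :
    (∃ r : ℕ, (r : ℝ) < t * Real.logb 2 (2 * k) / (1 - (t : ℝ) / k * Real.logb 2 (Real.exp 1)) ∧
        ∃ p : (Fin k → ZMod 2) → Fin r → ZMod 2, IsFCCBin t f p) ∧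
      (optRedundancyBin k t f : ℝ) <
        t * Real.logb 2 (2 * k) / (1 - (t : ℝ) / k * Real.logb 2 (Real.exp 1)) := by
  obtain ⟨m, hm, hkm, hmin⟩ := exists_two_pow_pred_lt_add_mul (by omega : 0 < k) ht
  obtain ⟨p, hp⟩ := exists_parity_map_lt_hammingDist hm.ne' hkm
  have hfcc : IsFCCBin t f p := fun u v huv => hp u v (ne_of_apply_ne f huv)
  have hbound := mul_lt_div_of_two_pow_pred_lt (by omega) ht hm hreg hmin
  have hopt : optRedundancyBin k t f ≤ t * m := Nat.sInf_le ⟨p, hfcc⟩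
  exact ⟨⟨t * m, hbound, p, hfcc⟩, lt_of_le_of_lt (by exact_mod_cast hopt) hbound⟩
end

section
/- Let F be a finite field, let k ≥ 1 and t ≥ 1 be integers, and let f : F^k → S be a function (into any type S) that is not constant. Then for every natural number r and every parity map p : F^k → F^r such that for all messages u, v with f(u) ≠ f(v) the Hamming distance between the concatenated codewords (u, p(u)) and (v, p(v)) is at least 2t+1, one has r ≥ 2t. -/
open Finset Function

lemma hd_append_aux {F : Type*} [DecidableEq F] {k r : ℕ} (u v : Fin k → F) (a b : Fin r → F) :
    hammingDist (Fin.append u a) (Fin.append v b) = hammingDist u v + hammingDist a b := by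
  simp only [hammingDist, Finset.card_filter]
  rw [Fin.sum_univ_add]
  simp [Fin.append_left, Fin.append_right]

lemma exists_adjacent_aux {F : Type*} [DecidableEq F] {S : Type*} {k : ℕ}
    (f : (Fin k → F) → S) :
    ∀ n (u v : Fin k → F), hammingDist u v ≤ n → f u ≠ f v →
      ∃ u' v' : Fin k → F, f u' ≠ f v' ∧ hammingDist u' v' ≤ 1 := by
  intro n
  induction n with
  | zero => intro u v hle h; exact ⟨u, v, h, hle.trans (Nat.zero_le 1)⟩
  | succ n ih =>
    intro u v hle h
    by_cases h1 : hammingDist u v ≤ 1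
    · exact ⟨u, v, h, h1⟩
    · have hne : u ≠ v := by
        intro he; subst he; exact h rfl
      obtain ⟨i, hi⟩ : ∃ i, u i ≠ v i := Function.ne_iff.mp hne
      set w := Function.update u i (v i) with hw
      have huw : hammingDist u w ≤ 1 := by
        have : ({j | u j ≠ w j} : Finset (Fin k)) ⊆ {i} := by
          intro j hj
          simp only [mem_filter, mem_univ, true_and] at hj
          simp only [mem_singleton]
          by_contra hji
          exact hj (by simp [hw, Function.update_of_ne hji])
        simpa [hammingDist] using (Finset.card_le_card this).trans_eq (Finset.card_singleton i)
      have hwv : hammingDist w v ≤ n := by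
        have hss : ({j | w j ≠ v j} : Finset (Fin k)) ⊂ ({j | u j ≠ v j} : Finset (Fin k)) := by
          constructor
          · intro j hj
            simp only [mem_filter, mem_univ, true_and] at hj ⊢
            by_cases hji : j = i
            · subst hji; simp [hw] at hj
            · simpa [hw, Function.update_of_ne hji] using hj
          · intro hsub
            have := hsub (by simp [hi] : i ∈ ({j | u j ≠ v j} : Finset (Fin k)))
            simp [hw] at this
        have := Finset.card_lt_card hss
        have : hammingDist w v < hammingDist u v := this
        omega
      by_cases hfu : f u ≠ f w
      · exact ⟨u, w, hfu, huw⟩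
      · push_neg at hfu
        exact ih w v hwv (hfu ▸ h)

/-- Lower bound `r ≥ 2t` on the redundancy of any `(f,t)`-FCC over a finite
field `F` for a non-constant function `f`. -/
theorem fcc_redundancy_lower_bound_finite_field {F : Type*} [Field F] [Fintype F]
    [DecidableEq F] {S : Type*} (k t : ℕ) (hk : 1 ≤ k) (ht : 1 ≤ t)
    (f : (Fin k → F) → S) (hf : ∃ u v : Fin k → F, f u ≠ f v)
    (r : ℕ) (p : (Fin k → F) → Fin r → F)
    (hp : ∀ u v : Fin k → F, f u ≠ f v →
      2 * t + 1 ≤ hammingDist (Fin.append u (p u)) (Fin.append v (p v))) :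
    2 * t ≤ r := by
  obtain ⟨u0, v0, h0⟩ := hf
  obtain ⟨u, v, hfuv, hd1⟩ :=
    exists_adjacent_aux f (hammingDist u0 v0) u0 v0 le_rfl h0
  have h := hp u v hfuv
  rw [hd_append_aux] at h
  have hpr : hammingDist (p u) (p v) ≤ r := hammingDist_le_card_fintype.trans (by simp)
  omega
end

section
/- Let F be a finite field with |F| ≥ k + 2t, where k ≥ 1 and t ≥ 1. Then there exists a k × 2t matrix P over F such that the systematic linear code generated by the matrix G = [I_k | P] (i.e., the code {(u, u·P) : u ∈ F^k} ⊆ F^{k+2t}) has minimum Hamming distance at least 2t+1; equivalently, every nonzero message u ∈ F^k yields a codeword (u, u·P) of Hamming weight at least 2t+1. This is a systematic [k+2t, k, 2t+1] MDS code. -/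
/-- If `|F| ≥ k + 2t`, there is a `k × 2t` matrix `P` over `F` such that the
systematic code `{(u, u·P)}` has minimum Hamming distance at least `2t+1`, i.e., every
nonzero message yields a codeword of Hamming weight at least `2t+1`. -/
theorem exists_systematic_mds_matrix {F : Type*} [Field F] [Fintype F] [DecidableEq F]
    (k t : ℕ) (hk : 1 ≤ k) (ht : 1 ≤ t) (hq : k + 2 * t ≤ Fintype.card F) :
    ∃ P : Matrix (Fin k) (Fin (2 * t)) F,
      ∀ u : Fin k → F, u ≠ 0 →
        2 * t + 1 ≤ hammingNorm (Fin.append u (Matrix.vecMul u P)) := by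
  obtain ⟨e⟩ : Nonempty (Fin (k + 2 * t) ↪ F) :=
    Function.Embedding.nonempty_of_card_le (by simpa using hq)
  set vk : Fin k → F := fun i => e (Fin.castAdd (2 * t) i) with hvk
  have hinj : Set.InjOn vk (Finset.univ : Finset (Fin k)) := fun a _ b _ h => by
    have := e.injective h
    exact Fin.castAdd_injective _ _ this
  refine ⟨fun i j => (Lagrange.basis Finset.univ vk i).eval (e (Fin.natAdd k j)), ?_⟩
  intro u hu
  set f : Polynomial F := Lagrange.interpolate Finset.univ vk u with hf
  -- the codeword is the evaluation of f at the points e l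
  have hcode : ∀ l : Fin (k + 2 * t),
      Fin.append u (Matrix.vecMul u (fun i j =>
        (Lagrange.basis Finset.univ vk i).eval (e (Fin.natAdd k j)))) l = f.eval (e l) := by
    intro l
    refine Fin.addCases (fun i => ?_) (fun j => ?_) l
    · rw [Fin.append_left]
      exact (Lagrange.eval_interpolate_at_node u hinj (Finset.mem_univ i)).symm
    · rw [Fin.append_right]
      simp [Matrix.vecMul, dotProduct, hf, Lagrange.interpolate_apply,
        Polynomial.eval_finset_sum]
  have hfne : f ≠ 0 := by
    intro h0
    apply hu
    funext i
    have := Lagrange.eval_interpolate_at_node u hinj (Finset.mem_univ i)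
    rw [← hf, h0] at this
    simpa using this.symm
  have hdeg : f.natDegree ≤ k - 1 := by
    have := Lagrange.degree_interpolate_lt u hinj
    rw [← hf] at this
    simp only [Finset.card_univ, Fintype.card_fin] at this
    have hnd : f.natDegree < k := by
      rwa [← Polynomial.natDegree_lt_iff_degree_lt hfne] at this
    omega
  -- count zeros
  classical
  set Z : Finset (Fin (k + 2 * t)) := {l | f.eval (e l) = 0} with hZ
  have hZcard : Z.card ≤ k - 1 := by
    have hmap : ∀ l ∈ Z, e l ∈ f.roots.toFinset := by
      intro l hl
      rw [Multiset.mem_toFinset, Polynomial.mem_roots hfne]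
      simpa [hZ] using (by simpa [hZ] using hl : f.eval (e l) = 0)
    calc Z.card ≤ f.roots.toFinset.card :=
          Finset.card_le_card_of_injOn e hmap (fun a _ b _ h => e.injective h)
      _ ≤ Multiset.card f.roots := f.roots.toFinset_card_le
      _ ≤ f.natDegree := f.card_roots'
      _ ≤ k - 1 := hdeg
  have hknorm : (k + 2 * t) - Z.card ≤ hammingNorm (Fin.append u (Matrix.vecMul u (fun i j =>
        (Lagrange.basis Finset.univ vk i).eval (e (Fin.natAdd k j))))) := by
    unfold hammingNorm
    have : (Finset.univ : Finset (Fin (k + 2 * t))) \ Z ⊆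
        Finset.filter (fun l => Fin.append u (Matrix.vecMul u (fun i j =>
          (Lagrange.basis Finset.univ vk i).eval (e (Fin.natAdd k j)))) l ≠ 0) Finset.univ := by
      intro l hl
      simp only [Finset.mem_sdiff, Finset.mem_univ, true_and, hZ, Finset.mem_filter] at hl
      simp only [Finset.mem_filter, Finset.mem_univ, true_and, hcode l]
      simpa using hl
    calc (k + 2 * t) - Z.card = ((Finset.univ : Finset (Fin (k + 2 * t))) \ Z).card := by
          rw [Finset.card_sdiff_of_subset (Finset.subset_univ _)]; simp
      _ ≤ _ := Finset.card_le_card this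
  omega
end

section
/- Let k ≥ 1 and t ≥ 1 be integers, and let f : 𝔽₂^k → 𝔽₂ be the multi-input OR function, i.e., f(u) = 0 if and only if u = 0 and f(u) = 1 otherwise. Define the parity map p : 𝔽₂^k → 𝔽₂^{2t} by p(0) = (0,…,0) and p(u) = (1,…,1) for u ≠ 0. Then for all messages u, v with f(u) ≠ f(v), the Hamming distance between the concatenated codewords (u, p(u)) and (v, p(v)) is at least 2t+1. Combined with the general lower bound, the optimal redundancy of an (f,t)-FCC for the OR function equals exactly 2t. -/
lemma hd_append {m n : ℕ} (u v : Fin m → ZMod 2) (a b : Fin n → ZMod 2) :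
    hammingDist (Fin.append u a) (Fin.append v b) = hammingDist u v + hammingDist a b := by
  classical
  simp only [hammingDist, Finset.card_filter]
  rw [Fin.sum_univ_add]
  simp [Fin.append_left, Fin.append_right]

lemma hd_const (n : ℕ) : hammingDist (fun _ : Fin n => (0:ZMod 2)) (fun _ => 1) = n := by
  simp [hammingDist, Finset.filter_true_of_mem]

/-- For the multi-input OR function `f` (with `f(u) = 0` iff `u = 0`), the
parity map sending `0` to the all-zero vector of length `2t` and every other message to
the all-one vector yields an `(f,t)`-FCC, and the optimal redundancy equals `2t`. -/
theorem fcc_or_function_redundancy (k t : ℕ) (hk : 1 ≤ k) (ht : 1 ≤ t)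
    (f : (Fin k → ZMod 2) → ZMod 2) (hf : ∀ u, f u = if u = 0 then 0 else 1)
    (p : (Fin k → ZMod 2) → Fin (2 * t) → ZMod 2)
    (hp : ∀ u, p u = if u = 0 then (fun _ => 0) else (fun _ => 1)) :
    (∀ u v : Fin k → ZMod 2, f u ≠ f v →
      2 * t + 1 ≤ hammingDist (Fin.append u (p u)) (Fin.append v (p v))) ∧
    optRedundancyBin k t f = 2 * t := by
  have claim1 : ∀ u v : Fin k → ZMod 2, f u ≠ f v →
      2 * t + 1 ≤ hammingDist (Fin.append u (p u)) (Fin.append v (p v)) := by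
    intro u v huv
    have huvne : u ≠ v := fun h => huv (by rw [h])
    have h1 : 1 ≤ hammingDist u v := hammingDist_pos.mpr huvne
    by_cases hu : u = 0 <;> by_cases hv : v = 0
    · exact absurd rfl (by rw [hu, hv] at huvne; exact huvne)
    · rw [hd_append, hp u, hp v, if_pos hu, if_neg hv, hd_const]
      omega
    · rw [hd_append, hp u, hp v, if_neg hu, if_pos hv, hammingDist_comm (fun _ => 1),
        hd_const]
      omega
    · exfalso; apply huv; rw [hf u, hf v, if_neg hu, if_neg hv]
  refine ⟨claim1, ?_⟩
  have hmem : 2 * t ∈ {r : ℕ | ∃ q : (Fin k → ZMod 2) → Fin r → ZMod 2, IsFCCBin t f q} :=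
    ⟨p, claim1⟩
  refine le_antisymm (Nat.sInf_le hmem) (le_csInf ⟨2 * t, hmem⟩ ?_)
  rintro r ⟨q, hq⟩
  set i0 : Fin k := ⟨0, hk⟩
  set v : Fin k → ZMod 2 := Function.update (0 : Fin k → ZMod 2) i0 1 with hvdef
  have hvne : v ≠ 0 := by
    intro h
    have := congrFun h i0
    simp [hvdef] at this
  have hfne : f 0 ≠ f v := by
    rw [hf 0, hf v, if_pos rfl, if_neg hvne]
    simp
  have h := hq 0 v hfne
  rw [hd_append] at h
  have h1 : hammingDist (0 : Fin k → ZMod 2) v ≤ 1 := by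
    have hsub : (Finset.univ.filter fun i => (0 : Fin k → ZMod 2) i ≠ v i) ⊆ {i0} := by
      intro i hi
      simp only [Finset.mem_filter, ne_eq] at hi
      by_contra hne
      simp only [Finset.mem_singleton] at hne
      exact hi.2 (by simp [hvdef, Function.update_of_ne hne])
    calc hammingDist (0 : Fin k → ZMod 2) v ≤ ({i0} : Finset (Fin k)).card :=
          Finset.card_le_card hsub
      _ = 1 := Finset.card_singleton i0
  have h2 : hammingDist (q 0) (q v) ≤ r := by
    have := hammingDist_le_card_fintype (x := q 0) (y := q v)
    simpa using this
  omega
end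

section
/- Let k ≥ 2, t ≥ 1, and n be natural numbers, and let C ⊆ 𝔽₂^n be a set of binary vectors with |C| = 2^k such that any two distinct elements of C have Hamming distance at least 2t+1. Then n − k > 2t; that is, any binary code of dimension k ≥ 2 and minimum distance 2t+1 requires strictly more than 2t redundancy symbols. -/
/-!
Three codewords at pairwise distance at least `2t + 1` force `n ≥ 3t + 2`, since in every
coordinate at most two of the three pairs differ. The Hamming balls of radius `t` around the
codewords are disjoint, so `2^k · V(n, t) ≤ 2^n` with `V(n, t) = ∑_{j ≤ t} C(n, j)`; and for
`n > 3t ≥ 3` Pascal's rule gives `V(n, t) > 4^t`, hence `2^(k + 2t) < 2^n`.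
-/

open Finset

def hammingVolume (n t : ℕ) : ℕ := ∑ j ∈ range (t + 1), n.choose j

theorem hammingVolume_succ_succ (n t : ℕ) :
    hammingVolume (n + 1) (t + 1) = hammingVolume n (t + 1) + hammingVolume n t := by
  simp only [hammingVolume]
  rw [sum_range_succ', sum_range_succ' (fun j => n.choose j) (t + 1)]
  simp only [Nat.choose_succ_succ, Nat.choose_zero_right, sum_add_distrib]
  ring

theorem one_le_hammingVolume (n t : ℕ) : 1 ≤ hammingVolume n t := by
  simp [hammingVolume, sum_range_succ']

theorem hammingVolume_le_succ_right (n t : ℕ) : hammingVolume n t ≤ hammingVolume n (t + 1) :=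
  sum_le_sum_of_subset (range_subset_range.2 (Nat.le_succ _))

theorem hammingVolume_succ_lt_succ_left (n t : ℕ) :
    hammingVolume n (t + 1) < hammingVolume (n + 1) (t + 1) := by
  have := one_le_hammingVolume n t
  rw [hammingVolume_succ_succ]
  omega

theorem hammingVolume_le_succ_left (n t : ℕ) : hammingVolume n t ≤ hammingVolume (n + 1) t := by
  cases t with
  | zero => simp [hammingVolume]
  | succ t => exact (hammingVolume_succ_lt_succ_left n t).le

theorem four_mul_hammingVolume_le (n t : ℕ) :
    4 * hammingVolume n t ≤ hammingVolume (n + 3) (t + 1) := by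
  have h₁ := hammingVolume_le_succ_right n t
  have h₂ := hammingVolume_le_succ_left n t
  have h₃ : hammingVolume (n + 1) t ≤ hammingVolume (n + 2) t := hammingVolume_le_succ_left _ t
  rw [hammingVolume_succ_succ, hammingVolume_succ_succ, hammingVolume_succ_succ]
  omega

theorem four_pow_le_hammingVolume (t : ℕ) : 4 ^ t ≤ hammingVolume (3 * t) t := by
  induction t with
  | zero => simp [hammingVolume]
  | succ t ih =>
    calc 4 ^ (t + 1) = 4 * 4 ^ t := pow_succ' 4 t
      _ ≤ 4 * hammingVolume (3 * t) t := by gcongr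
      _ ≤ hammingVolume (3 * (t + 1)) (t + 1) := four_mul_hammingVolume_le _ _

theorem four_pow_lt_hammingVolume {n t : ℕ} (ht : 1 ≤ t) (hn : 3 * t < n) :
    4 ^ t < hammingVolume n t := by
  obtain ⟨s, rfl⟩ : ∃ s, t = s + 1 := ⟨t - 1, by omega⟩
  have hmono : StrictMono (hammingVolume · (s + 1)) :=
    strictMono_nat_of_lt_succ fun m => hammingVolume_succ_lt_succ_left m s
  exact (four_pow_le_hammingVolume _).trans_lt (hmono hn)

section Hamming

variable {ι : Type*} [Fintype ι]

theorem hammingDist_add_hammingDist_add_hammingDist_le (a b c : ι → ZMod 2) :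
    hammingDist a b + hammingDist b c + hammingDist a c ≤ 2 * Fintype.card ι := by
  simp only [hammingDist, card_filter, ← sum_add_distrib]
  calc _ ≤ ∑ _i : ι, 2 := sum_le_sum fun i _ => ?_
    _ = 2 * Fintype.card ι := by simp [mul_comm]
  have : ∀ x y z : ZMod 2,
      (if x ≠ y then 1 else 0) + (if y ≠ z then 1 else 0) + (if x ≠ z then 1 else 0) ≤ 2 := by
    decide
  exact this (a i) (b i) (c i)

theorem three_mul_le_two_mul_card {C : Finset (ι → ZMod 2)} {d : ℕ} (h : 2 < #C)
    (hC : ∀ c₁ ∈ C, ∀ c₂ ∈ C, c₁ ≠ c₂ → d ≤ hammingDist c₁ c₂) :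
    3 * d ≤ 2 * Fintype.card ι := by
  obtain ⟨a, ha, b, hb, c, hc, hab, hac, hbc⟩ := two_lt_card.1 h
  have := hammingDist_add_hammingDist_add_hammingDist_le a b c
  have := hC a ha b hb hab
  have := hC b hb c hc hbc
  have := hC a ha c hc hac
  omega

variable [DecidableEq ι]

def hammingBall {β : ι → Type*} [∀ i, Fintype (β i)] [∀ i, DecidableEq (β i)]
    (c : ∀ i, β i) (t : ℕ) : Finset (∀ i, β i) :=
  {x | hammingDist x c ≤ t}

@[simp]
theorem mem_hammingBall {β : ι → Type*} [∀ i, Fintype (β i)] [∀ i, DecidableEq (β i)]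
    {c x : ∀ i, β i} {t : ℕ} : x ∈ hammingBall c t ↔ hammingDist x c ≤ t := by
  simp [hammingBall]

theorem disjoint_hammingBall {β : ι → Type*} [∀ i, Fintype (β i)] [∀ i, DecidableEq (β i)]
    {c₁ c₂ : ∀ i, β i} {t : ℕ} (h : 2 * t < hammingDist c₁ c₂) :
    Disjoint (hammingBall c₁ t) (hammingBall c₂ t) := by
  refine disjoint_left.2 fun x hx₁ hx₂ => ?_
  rw [mem_hammingBall] at hx₁ hx₂
  have := hammingDist_triangle_left c₁ c₂ x
  omega

theorem card_filter_hammingNorm_eq (j : ℕ) :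
    #{x : ι → ZMod 2 | hammingNorm x = j} = (Fintype.card ι).choose j := by
  rw [← card_univ, ← card_powersetCard]
  refine card_nbij' (fun x => ({i | x i ≠ 0} : Finset ι)) (fun s i => if i ∈ s then 1 else 0)
    ?_ ?_ ?_ ?_
  · intro x hx
    simpa [mem_powersetCard_univ, hammingNorm] using hx
  · intro s hs
    simp only [mem_coe, mem_powersetCard_univ] at hs
    simp [hammingNorm, ← hs]
  · intro x _
    funext i
    have : ∀ a : ZMod 2, (if a ≠ 0 then 1 else 0) = a := by decide
    simpa using this (x i)
  · intro s _
    ext i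
    by_cases hi : i ∈ s <;> simp [hi]

theorem card_hammingBall_zero (t : ℕ) :
    #(hammingBall (0 : ι → ZMod 2) t) = hammingVolume (Fintype.card ι) t := by
  rw [card_eq_sum_card_fiberwise (f := hammingNorm) (t := range (t + 1))]
  · refine sum_congr rfl fun j hj => ?_
    rw [← card_filter_hammingNorm_eq]
    congr 1
    ext x
    simp only [mem_filter, mem_hammingBall, hammingDist_zero_right, mem_univ, true_and]
    exact and_iff_right_of_imp fun h => h ▸ Nat.lt_succ_iff.1 (mem_range.1 hj)
  · intro x hx
    simpa [Nat.lt_succ_iff] using hx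

theorem card_hammingBall (c : ι → ZMod 2) (t : ℕ) :
    #(hammingBall c t) = hammingVolume (Fintype.card ι) t := by
  rw [← card_hammingBall_zero]
  refine card_nbij' (· - c) (· + c) ?_ ?_ (fun x _ => sub_add_cancel x c)
    (fun x _ => add_sub_cancel_right x c)
  all_goals
    intro x hx
    simpa [hammingDist, sub_eq_zero] using hx

theorem card_mul_hammingVolume_le {C : Finset (ι → ZMod 2)} {t : ℕ}
    (hC : ∀ c₁ ∈ C, ∀ c₂ ∈ C, c₁ ≠ c₂ → 2 * t < hammingDist c₁ c₂) :
    #C * hammingVolume (Fintype.card ι) t ≤ 2 ^ Fintype.card ι :=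
  calc #C * hammingVolume (Fintype.card ι) t = ∑ c ∈ C, #(hammingBall c t) := by
        simp [card_hammingBall]
    _ = #(C.biUnion (hammingBall · t)) :=
        (card_biUnion fun c₁ h₁ c₂ h₂ hne => disjoint_hammingBall (hC c₁ h₁ c₂ h₂ hne)).symm
    _ ≤ Fintype.card (ι → ZMod 2) := card_le_univ _
    _ = 2 ^ Fintype.card ι := by simp

end Hamming

/-- Any binary code of length `n`, size `2^k` with `k ≥ 2`, and minimum
distance `2t+1` has redundancy strictly greater than `2t`. -/
theorem binary_code_redundancy_gt (k t n : ℕ) (hk : 2 ≤ k) (ht : 1 ≤ t)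
    (C : Finset (Fin n → ZMod 2)) (hcard : C.card = 2 ^ k)
    (hdist : ∀ c₁ ∈ C, ∀ c₂ ∈ C, c₁ ≠ c₂ → 2 * t + 1 ≤ hammingDist c₁ c₂) :
    2 * t < n - k := by
  have hC : 2 < #C :=
    hcard ▸ (Nat.lt_pow_self (by norm_num)).trans_le (Nat.pow_le_pow_right two_pos hk)
  have hn : 3 * t < n := by
    have := three_mul_le_two_mul_card hC hdist
    rw [Fintype.card_fin] at this
    omega
  have hpack := card_mul_hammingVolume_le (t := t) hdist
  rw [hcard, Fintype.card_fin] at hpack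
  have : 2 ^ (k + 2 * t) < 2 ^ n :=
    calc 2 ^ (k + 2 * t) = 2 ^ k * 4 ^ t := by rw [pow_add, pow_mul]; norm_num
      _ < 2 ^ k * hammingVolume n t := by gcongr; exact four_pow_lt_hammingVolume ht hn
      _ ≤ 2 ^ n := hpack
  have := (Nat.pow_lt_pow_iff_right (by norm_num)).1 this
  omega
end
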